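/- arXiv:1407.8160 — 3 statements merged into one kernel-verified Lean document; each statement's English description precedes it below -/
import Mathlib

section
/- Let V : A⊗E → B⊗F be an isometry and |κ⟩ ∈ E⊗H a pure state with Schmidt decomposition |κ⟩ = Σ_i √p_i |η_i⟩|i⟩. Define the channel N_κ(ρ) = Tr_F[(V⊗I_H)(ρ ⊗ |κ⟩⟨κ|)(V⊗I_H)†] from A to B⊗H. If for every i there exists a CPTP map D_i : B → F with Ñ_{η_i} = D_i ∘ N_{η_i} (where N_η(ρ) = Tr_F V(ρ⊗|η⟩⟨η|)V† and Ñ_η(ρ) = Tr_B V(ρ⊗|η⟩⟨η|)V†), then N_κ is degradable: the map D(σ ⊗ |i⟩⟨j|) := δ_{ij} D_i(σ) is CPTP on B⊗H and satisfies Ñ_κ = D ∘ N_κ, where Ñ_κ(ρ) = Tr_{BH}[(V⊗I)(ρ⊗|κ⟩⟨κ|)(V⊗I)†] = Σ_i p_i Ñ_{η_i}(ρ). -/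
open Matrix
open scoped ComplexOrder

/-- The Choi matrix of a linear map between matrix algebras. -/
noncomputable def choiMatrix {n m : Type*} [Fintype n] [DecidableEq n]
    (Φ : Matrix n n ℂ →ₗ[ℂ] Matrix m m ℂ) : Matrix (n × m) (n × m) ℂ :=
  Matrix.of fun p q => Φ (Matrix.single p.1 q.1 1) p.2 q.2

/-- A linear map between matrix algebras is CPTP iff its Choi matrix is positive
semidefinite and it preserves the trace. -/
def IsCPTP {n m : Type*} [Fintype n] [DecidableEq n] [Fintype m]
    (Φ : Matrix n n ℂ →ₗ[ℂ] Matrix m m ℂ) : Prop :=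
  (choiMatrix Φ).PosSemidef ∧ ∀ x, (Φ x).trace = x.trace

section
variable {A E B F H : Type*} [Fintype A] [Fintype E] [Fintype B] [Fintype F] [Fintype H]

/-- The channel `N_η(ρ) = Tr_F[V (ρ ⊗ |η⟩⟨η|) V†]` from `A` to `B`. -/
noncomputable def Nchan (V : Matrix (B × F) (A × E) ℂ) (η : E → ℂ)
    (ρ : Matrix A A ℂ) : Matrix B B ℂ :=
  Matrix.of fun b b' => ∑ f, ∑ a, ∑ e, ∑ a', ∑ e',
    V (b, f) (a, e) * ρ a a' * η e * (starRingEnd ℂ) (η e')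
      * (starRingEnd ℂ) (V (b', f) (a', e'))

/-- The complementary channel `Ñ_η(ρ) = Tr_B[V (ρ ⊗ |η⟩⟨η|) V†]` from `A` to `F`. -/
noncomputable def Ncomp (V : Matrix (B × F) (A × E) ℂ) (η : E → ℂ)
    (ρ : Matrix A A ℂ) : Matrix F F ℂ :=
  Matrix.of fun f f' => ∑ b, ∑ a, ∑ e, ∑ a', ∑ e',
    V (b, f) (a, e) * ρ a a' * η e * (starRingEnd ℂ) (η e')
      * (starRingEnd ℂ) (V (b, f') (a', e'))

/-- The channel `N_κ(ρ) = Tr_F[(V ⊗ I_H)(ρ ⊗ |κ⟩⟨κ|)(V ⊗ I_H)†]` from `A` to `B ⊗ H`. -/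
noncomputable def Nkappa (V : Matrix (B × F) (A × E) ℂ) (κ : E × H → ℂ)
    (ρ : Matrix A A ℂ) : Matrix (B × H) (B × H) ℂ :=
  Matrix.of fun p q => ∑ f, ∑ a, ∑ e, ∑ a', ∑ e',
    V (p.1, f) (a, e) * ρ a a' * κ (e, p.2) * (starRingEnd ℂ) (κ (e', q.2))
      * (starRingEnd ℂ) (V (q.1, f) (a', e'))

/-- The complementary channel `Ñ_κ(ρ) = Tr_{BH}[(V ⊗ I_H)(ρ ⊗ |κ⟩⟨κ|)(V ⊗ I_H)†]`. -/
noncomputable def Nkappacomp (V : Matrix (B × F) (A × E) ℂ) (κ : E × H → ℂ)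
    (ρ : Matrix A A ℂ) : Matrix F F ℂ :=
  Matrix.of fun f f' => ∑ b, ∑ h, ∑ a, ∑ e, ∑ a', ∑ e',
    V (b, f) (a, e) * ρ a a' * κ (e, h) * (starRingEnd ℂ) (κ (e', h))
      * (starRingEnd ℂ) (V (b, f') (a', e'))

/-!
The `i`-th diagonal block of `N_κ(ρ)` is the channel built from the slice `κ(·, i) = √pᵢ ηᵢ`,
namely `pᵢ N_{ηᵢ}(ρ)`, while tracing out `H` gives `Ñ_κ(ρ) = ∑ᵢ pᵢ Ñ_{ηᵢ}(ρ)`. Hence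
`D = ∑ᵢ Dᵢ ∘ (i-th diagonal block)` degrades `N_κ`, and it is CPTP because its Choi matrix is a
reindexing of the block-diagonal matrix whose blocks are the Choi matrices of the `Dᵢ`.
-/

theorem Matrix.PosSemidef.blockDiagonal {𝕜 m o : Type*} [RCLike 𝕜] [Fintype m] [Fintype o]
    [DecidableEq o] {M : o → Matrix m m 𝕜} (hM : ∀ k, (M k).PosSemidef) :
    (Matrix.blockDiagonal M).PosSemidef := by
  classical
  open scoped MatrixOrder in
  choose S hS using fun k => CStarAlgebra.nonneg_iff_eq_star_mul_self.mp (hM k).nonneg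
  have hfactor : Matrix.blockDiagonal M = (Matrix.blockDiagonal S)ᴴ * Matrix.blockDiagonal S := by
    rw [blockDiagonal_conjTranspose, ← blockDiagonal_mul]
    exact congrArg _ (funext hS)
  exact hfactor ▸ posSemidef_conjTranspose_mul_self _

section Blocks

variable {R m n o : Type*} [Semiring R]

def diagBlock (i : o) : Matrix (m × o) (m × o) R →ₗ[R] Matrix m m R where
  toFun σ := σ.submatrix (·, i) (·, i)
  map_add' _ _ := rfl
  map_smul' _ _ := rfl

@[simp]
theorem diagBlock_apply (i : o) (σ : Matrix (m × o) (m × o) R) (b b' : m) :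
    diagBlock i σ b b' = σ (b, i) (b', i) := rfl

theorem diagBlock_single [DecidableEq m] [DecidableEq o] (i : o) (b b' : m) (h h' : o) (c : R) :
    diagBlock i (Matrix.single (b, h) (b', h') c) =
      if h = i ∧ h' = i then Matrix.single b b' c else 0 := by
  ext x y
  by_cases hh : h = i <;> by_cases hh' : h' = i <;> simp [Matrix.single_apply, hh, hh']

theorem sum_trace_diagBlock [Fintype m] [Fintype o] (σ : Matrix (m × o) (m × o) R) :
    ∑ i, (diagBlock i σ).trace = σ.trace := by
  simp only [Matrix.trace, Matrix.diag, diagBlock_apply, Fintype.sum_prod_type]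
  exact Finset.sum_comm

end Blocks

section BlockChannel

variable {m n o : Type*} [Fintype o]

/-- The map `σ ⊗ |i⟩⟨j| ↦ δ_{ij} D_i(σ)`. -/
noncomputable def blockChannel (D : o → (Matrix m m ℂ →ₗ[ℂ] Matrix n n ℂ)) :
    Matrix (m × o) (m × o) ℂ →ₗ[ℂ] Matrix n n ℂ :=
  ∑ i, (D i).comp (diagBlock i)

theorem blockChannel_apply (D : o → (Matrix m m ℂ →ₗ[ℂ] Matrix n n ℂ))
    (σ : Matrix (m × o) (m × o) ℂ) : blockChannel D σ = ∑ i, D i (diagBlock i σ) := by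
  simp [blockChannel, LinearMap.sum_apply]

theorem choiMatrix_blockChannel [Fintype m] [DecidableEq m] [DecidableEq o]
    (D : o → (Matrix m m ℂ →ₗ[ℂ] Matrix n n ℂ)) :
    choiMatrix (blockChannel D) =
      (Matrix.blockDiagonal fun i => choiMatrix (D i)).submatrix
        (fun q => ((q.1.1, q.2), q.1.2)) (fun q => ((q.1.1, q.2), q.1.2)) := by
  ext ⟨⟨b, h⟩, f⟩ ⟨⟨b', h'⟩, f'⟩
  simp only [choiMatrix, Matrix.of_apply, blockChannel_apply, diagBlock_single, Matrix.sum_apply,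
    Matrix.submatrix_apply, Matrix.blockDiagonal_apply]
  rw [Finset.sum_eq_single h (fun i _ hi => by simp [Ne.symm hi]) (by simp)]
  rcases eq_or_ne h h' with rfl | hh
  · simp
  · simp [hh, hh.symm]

theorem isCPTP_blockChannel [Fintype m] [Fintype n] [DecidableEq m] [DecidableEq o]
    {D : o → (Matrix m m ℂ →ₗ[ℂ] Matrix n n ℂ)} (hD : ∀ i, IsCPTP (D i)) :
    IsCPTP (blockChannel D) := by
  classical
  refine ⟨?_, fun σ => ?_⟩
  · rw [choiMatrix_blockChannel]
    exact (Matrix.PosSemidef.blockDiagonal fun i => (hD i).1).submatrix _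
  · simp only [blockChannel_apply, Matrix.trace_sum, (hD _).2, sum_trace_diagBlock]

end BlockChannel

omit [Fintype B] in
theorem Nchan_smul (V : Matrix (B × F) (A × E) ℂ) (c : ℂ) (η : E → ℂ) (ρ : Matrix A A ℂ) :
    Nchan V (c • η) ρ = (Complex.normSq c : ℂ) • Nchan V η ρ := by
  ext b b'
  simp only [Nchan, ← Complex.mul_conj, Matrix.of_apply, Matrix.smul_apply, Pi.smul_apply,
    smul_eq_mul, map_mul, Finset.mul_sum]
  congr! 5
  ring

omit [Fintype F] in
theorem Ncomp_smul (V : Matrix (B × F) (A × E) ℂ) (c : ℂ) (η : E → ℂ) (ρ : Matrix A A ℂ) :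
    Ncomp V (c • η) ρ = (Complex.normSq c : ℂ) • Ncomp V η ρ := by
  ext f f'
  simp only [Ncomp, ← Complex.mul_conj, Matrix.of_apply, Matrix.smul_apply, Pi.smul_apply,
    smul_eq_mul, map_mul, Finset.mul_sum]
  congr! 5
  ring

omit [Fintype B] [Fintype H] in
theorem diagBlock_Nkappa (V : Matrix (B × F) (A × E) ℂ) (κ : E × H → ℂ) (ρ : Matrix A A ℂ)
    (i : H) : diagBlock i (Nkappa V κ ρ) = Nchan V (fun e => κ (e, i)) ρ := rfl

omit [Fintype F] in
theorem Nkappacomp_eq_sum_Ncomp (V : Matrix (B × F) (A × E) ℂ) (κ : E × H → ℂ)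
    (ρ : Matrix A A ℂ) : Nkappacomp V κ ρ = ∑ i, Ncomp V (fun e => κ (e, i)) ρ := by
  ext f f'
  simp only [Nkappacomp, Ncomp, Matrix.of_apply, Matrix.sum_apply]
  exact Finset.sum_comm

theorem stmt13_general [DecidableEq B] [DecidableEq H]
    (V : Matrix (B × F) (A × E) ℂ)
    (p : H → ℝ) (hp : ∀ i, 0 ≤ p i)
    (η : H → E → ℂ)
    (κ : E × H → ℂ) (hκ : ∀ e i, κ (e, i) = (Real.sqrt (p i) : ℂ) * η i e)
    (D : H → (Matrix B B ℂ →ₗ[ℂ] Matrix F F ℂ))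
    (hD : ∀ i, IsCPTP (D i))
    (hdeg : ∀ i ρ, Ncomp V (η i) ρ = D i (Nchan V (η i) ρ)) :
    ∃ Dk : Matrix (B × H) (B × H) ℂ →ₗ[ℂ] Matrix F F ℂ,
      IsCPTP Dk ∧
      (∀ σ : Matrix (B × H) (B × H) ℂ,
        Dk σ = ∑ i, D i (Matrix.of fun b b' => σ (b, i) (b', i))) ∧
      ∀ ρ : Matrix A A ℂ, Nkappacomp V κ ρ = Dk (Nkappa V κ ρ) := by
  have hslice : ∀ i, (fun e => κ (e, i)) = (Real.sqrt (p i) : ℂ) • η i :=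
    fun i => funext fun e => hκ e i
  have hweight : ∀ i, (Complex.normSq (Real.sqrt (p i)) : ℂ) = p i := fun i => by
    rw [Complex.normSq_ofReal, Real.mul_self_sqrt (hp i)]
  refine ⟨blockChannel D, isCPTP_blockChannel hD, blockChannel_apply D, fun ρ => ?_⟩
  calc Nkappacomp V κ ρ = ∑ i, (p i : ℂ) • D i (Nchan V (η i) ρ) := by
        simp only [Nkappacomp_eq_sum_Ncomp, hslice, Ncomp_smul, hweight, hdeg]
    _ = blockChannel D (Nkappa V κ ρ) := by
        simp only [blockChannel_apply, diagBlock_Nkappa, hslice, Nchan_smul, hweight, map_smul]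

/-- If `V : A⊗E → B⊗F` is an isometry such that every `N_{η_i}` is degradable via `D_i`,
and `|κ⟩ = ∑_i √p_i |η_i⟩|i⟩` is a Schmidt decomposition, then `N_κ` is degradable
via the block map `D(σ ⊗ |i⟩⟨j|) = δ_{ij} D_i(σ)`. -/
theorem stmt13 [DecidableEq A] [DecidableEq B] [DecidableEq E] [DecidableEq H]
    (V : Matrix (B × F) (A × E) ℂ) (hV : Vᴴ * V = 1)
    (p : H → ℝ) (hp : ∀ i, 0 ≤ p i) (hpsum : ∑ i, p i = 1)
    (η : H → E → ℂ)
    (hη : ∀ i j, ∑ e, (starRingEnd ℂ) (η i e) * η j e = if i = j then 1 else 0)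
    (κ : E × H → ℂ) (hκ : ∀ e i, κ (e, i) = (Real.sqrt (p i) : ℂ) * η i e)
    (D : H → (Matrix B B ℂ →ₗ[ℂ] Matrix F F ℂ))
    (hD : ∀ i, IsCPTP (D i))
    (hdeg : ∀ i ρ, Ncomp V (η i) ρ = D i (Nchan V (η i) ρ)) :
    ∃ Dk : Matrix (B × H) (B × H) ℂ →ₗ[ℂ] Matrix F F ℂ,
      IsCPTP Dk ∧
      (∀ σ : Matrix (B × H) (B × H) ℂ,
        Dk σ = ∑ i, D i (Matrix.of fun b b' => σ (b, i) (b', i))) ∧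
      ∀ ρ : Matrix A A ℂ, Nkappacomp V κ ρ = Dk (Nkappa V κ ρ) :=
  stmt13_general V p hp η κ hκ D hD hdeg

end
end

section
/- Let V = |0⟩⟨0| ⊗ U_0 + |1⟩⟨1| ⊗ U_1 be a controlled unitary on C²⊗C², with U_0, U_1 ∈ SU(2). Let T denote transposition with respect to the magic basis. Then V^T V is unitarily similar to |1⟩⟨1| ⊗ U_0†U_1 + |0⟩⟨0| ⊗ U_1†U_0, and its spectrum is (e^{id}, e^{id}, e^{−id}, e^{−id}) where 2cos d = Tr(U_0†U_1). -/
open Matrix Polynomial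

/-!
Since `M Mᵀ = ε ⊗ ε` for the magic basis `M` and `ε = !![0, 1; -1, 0]`, transposition in the magic
basis is `X ↦ (ε ⊗ ε) Xᵀ (ε ⊗ ε)ᵀ`. For `2 × 2` matrices `ε Aᵀ εᵀ = adj A`, so on
`|0⟩⟨0| ⊗ A + |1⟩⟨1| ⊗ B` it acts as `|1⟩⟨1| ⊗ adj A + |0⟩⟨0| ⊗ adj B`, and `adj U = U†` on `SU(2)`.
Hence `Vᵀ V = |0⟩⟨0| ⊗ U₁†U₀ + |1⟩⟨1| ⊗ U₀†U₁` on the nose. Both blocks lie in `SU(2)` and have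
trace `2 cos d`, so each has characteristic polynomial `(X - e^{id}) (X - e^{-id})`.
-/

open scoped Kronecker

section TwoByTwo

variable {R : Type*} [CommRing R]

def leviCivita : Matrix (Fin 2) (Fin 2) R := !![0, 1; -1, 0]

theorem leviCivita_mul_transpose_mul (A : Matrix (Fin 2) (Fin 2) R) :
    leviCivita * Aᵀ * leviCivitaᵀ = adjugate A := by
  rw [adjugate_fin_two]
  ext i j
  fin_cases i <;> fin_cases j <;> simp [leviCivita, mul_apply, vecMul, dotProduct, Fin.sum_univ_two]

theorem leviCivita_kronecker_mul_transpose_mul (A B : Matrix (Fin 2) (Fin 2) R) :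
    (leviCivita ⊗ₖ leviCivita) * (A ⊗ₖ B)ᵀ * (leviCivita ⊗ₖ leviCivita)ᵀ
      = adjugate A ⊗ₖ adjugate B := by
  rw [← kroneckerMap_transpose, ← kroneckerMap_transpose, ← mul_kronecker_mul,
    ← mul_kronecker_mul, leviCivita_mul_transpose_mul, leviCivita_mul_transpose_mul]

theorem leviCivita_conjTranspose [StarRing R] :
    (leviCivita : Matrix (Fin 2) (Fin 2) R)ᴴ = leviCivitaᵀ := by
  ext i j
  fin_cases i <;> fin_cases j <;> simp [leviCivita]

theorem adjugate_single_zero_zero :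
    adjugate (single 0 0 1 : Matrix (Fin 2) (Fin 2) R) = single 1 1 1 := by
  rw [adjugate_fin_two]
  ext i j
  fin_cases i <;> fin_cases j <;> simp

theorem adjugate_single_one_one :
    adjugate (single 1 1 1 : Matrix (Fin 2) (Fin 2) R) = single 0 0 1 := by
  rw [adjugate_fin_two]
  ext i j
  fin_cases i <;> fin_cases j <;> simp

end TwoByTwo

theorem adjugate_eq_conjTranspose_of_mem_unitaryGroup {n R : Type*} [Fintype n] [DecidableEq n]
    [CommRing R] [StarRing R] {U : Matrix n n R} (hU : U ∈ unitaryGroup n R) (hdet : U.det = 1) :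
    adjugate U = Uᴴ :=
  calc adjugate U = (star U * U) * adjugate U := by rw [mem_unitaryGroup_iff'.mp hU, one_mul]
    _ = Uᴴ := by rw [Matrix.mul_assoc, mul_adjugate, hdet, one_smul, mul_one, star_eq_conjTranspose]

theorem charpoly_eq_of_trace_eq_two_cos {A : Matrix (Fin 2) (Fin 2) ℂ} {d : ℝ}
    (htr : A.trace = ((2 * Real.cos d : ℝ) : ℂ)) (hdet : A.det = 1) :
    A.charpoly
      = (X - C (Complex.exp (Complex.I * d))) * (X - C (Complex.exp (-(Complex.I * d)))) := by
  have hsum : Complex.exp (Complex.I * d) + Complex.exp (-(Complex.I * d))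
      = ((2 * Real.cos d : ℝ) : ℂ) := by
    push_cast
    rw [Complex.two_cos]
    ring_nf
  have hprod : Complex.exp (Complex.I * d) * Complex.exp (-(Complex.I * d)) = 1 := by
    rw [← Complex.exp_add, add_neg_cancel, Complex.exp_zero]
  rw [charpoly_fin_two, htr, hdet, ← hsum, ← hprod, C_add, C_mul]
  ring

section Controlled

variable {n α : Type*}

def controlled [Semiring α] (A B : Matrix n n α) : Matrix (Fin 2 × n) (Fin 2 × n) α :=
  (single 0 0 1 : Matrix (Fin 2) (Fin 2) α) ⊗ₖ A + (single 1 1 1 : Matrix (Fin 2) (Fin 2) α) ⊗ₖ B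

theorem controlled_eq_of [Semiring α] (A B : Matrix n n α) :
    controlled A B = of fun p q => if p.1 = q.1 then
      (if p.1 = 0 then A p.2 q.2 else B p.2 q.2) else 0 := by
  ext ⟨a, i⟩ ⟨b, j⟩
  fin_cases a <;> fin_cases b <;> simp [controlled]

theorem controlled_mul_controlled [Fintype n] [CommSemiring α] (A B C D : Matrix n n α) :
    controlled A B * controlled C D = controlled (A * C) (B * D) := by
  simp only [controlled, add_mul, mul_add, ← mul_kronecker_mul, single_mul_single_same,
    single_mul_single_of_ne _ _ _ _ zero_ne_one, single_mul_single_of_ne _ _ _ _ one_ne_zero,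
    zero_kronecker, add_zero, zero_add, mul_one]

def finTwoProdEquivSum (n : Type*) : Fin 2 × n ≃ n ⊕ n :=
  (finTwoEquiv.prodCongr (Equiv.refl n)).trans (Equiv.boolProdEquivSum n)

theorem controlled_eq_reindex_fromBlocks [Semiring α] (A B : Matrix n n α) :
    controlled A B
      = reindex (finTwoProdEquivSum n).symm (finTwoProdEquivSum n).symm (fromBlocks A 0 0 B) := by
  ext ⟨a, i⟩ ⟨b, j⟩
  fin_cases a <;> fin_cases b <;>
    simp [controlled, finTwoProdEquivSum, Equiv.boolProdEquivSum, finTwoEquiv]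

theorem charpoly_controlled [Fintype n] [DecidableEq n] [CommRing α] (A B : Matrix n n α) :
    (controlled A B).charpoly = A.charpoly * B.charpoly := by
  rw [controlled_eq_reindex_fromBlocks, charpoly_reindex, charpoly_fromBlocks_zero₁₂]

end Controlled

section Magic

/-- Column `k` holds the coordinates of the magic basis vector `|Φ_{k+1}⟩`. -/
noncomputable def magicBasis : Matrix (Fin 2 × Fin 2) (Fin 4) ℂ := Matrix.of fun x k =>
  if k = 0 then (if x = (0, 0) then 1 else if x = (1, 1) then 1 else 0) / (Real.sqrt 2 : ℂ)
  else if k = 1 then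
    (-Complex.I) * (if x = (0, 0) then 1 else if x = (1, 1) then -1 else 0) / (Real.sqrt 2 : ℂ)
  else if k = 2 then
    (if x = (0, 1) then 1 else if x = (1, 0) then -1 else 0) / (Real.sqrt 2 : ℂ)
  else
    (-Complex.I) * (if x = (0, 1) then 1 else if x = (1, 0) then 1 else 0) / (Real.sqrt 2 : ℂ)

noncomputable def magicTranspose (X : Matrix (Fin 2 × Fin 2) (Fin 2 × Fin 2) ℂ) :
    Matrix (Fin 2 × Fin 2) (Fin 2 × Fin 2) ℂ :=
  magicBasis * (magicBasisᴴ * X * magicBasis)ᵀ * magicBasisᴴ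

theorem magicBasis_mul_transpose : magicBasis * magicBasisᵀ = leviCivita ⊗ₖ leviCivita := by
  have hsqrt : ((Real.sqrt 2 : ℝ) : ℂ) ^ 2 = 2 := by
    norm_cast
    exact Real.sq_sqrt zero_le_two
  ext ⟨a, i⟩ ⟨b, j⟩
  fin_cases a <;> fin_cases b <;> fin_cases i <;> fin_cases j <;>
    simp [magicBasis, leviCivita, mul_apply, Fin.sum_univ_four, div_mul_div_comm] <;>
    ring_nf <;> simp [hsqrt]

theorem mul_transpose_conjTranspose_mul_mul {m k R : Type*} [Fintype m] [Fintype k]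
    [CommSemiring R] [StarRing R] (M : Matrix m k R) (X : Matrix m m R) :
    M * (Mᴴ * X * M)ᵀ * Mᴴ = (M * Mᵀ) * Xᵀ * (M * Mᵀ)ᴴ := by
  simp only [transpose_mul, conjTranspose_mul, conjTranspose_transpose_eq_transpose_conjTranspose,
    Matrix.mul_assoc]

theorem magicTranspose_eq (X : Matrix (Fin 2 × Fin 2) (Fin 2 × Fin 2) ℂ) :
    magicTranspose X = (leviCivita ⊗ₖ leviCivita) * Xᵀ * (leviCivita ⊗ₖ leviCivita)ᵀ := by
  rw [magicTranspose, mul_transpose_conjTranspose_mul_mul, magicBasis_mul_transpose,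
    conjTranspose_kronecker, leviCivita_conjTranspose, kroneckerMap_transpose]

theorem magicTranspose_controlled (A B : Matrix (Fin 2) (Fin 2) ℂ) :
    magicTranspose (controlled A B) = controlled (adjugate B) (adjugate A) := by
  rw [magicTranspose_eq, controlled, transpose_add, mul_add, add_mul,
    leviCivita_kronecker_mul_transpose_mul, leviCivita_kronecker_mul_transpose_mul,
    adjugate_single_zero_zero, adjugate_single_one_one, add_comm, controlled]

end Magic

/-- For a controlled unitary `V = |0⟩⟨0|⊗U₀ + |1⟩⟨1|⊗U₁` with `U₀, U₁ ∈ SU(2)`, the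
magic-basis transpose satisfies: `Vᵀ V` is unitarily similar to
`|1⟩⟨1|⊗U₀†U₁ + |0⟩⟨0|⊗U₁†U₀`, and its spectrum is `(e^{id}, e^{id}, e^{−id}, e^{−id})`
where `2 cos d = Tr(U₀†U₁)`. -/
theorem stmt16
    (U₀ U₁ : Matrix (Fin 2) (Fin 2) ℂ)
    (hU₀ : U₀ ∈ Matrix.unitaryGroup (Fin 2) ℂ) (hdet₀ : U₀.det = 1)
    (hU₁ : U₁ ∈ Matrix.unitaryGroup (Fin 2) ℂ) (hdet₁ : U₁.det = 1)
    (V : Matrix (Fin 2 × Fin 2) (Fin 2 × Fin 2) ℂ)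
    (hV : V = Matrix.of fun p q => if p.1 = q.1 then
        (if p.1 = 0 then U₀ p.2 q.2 else U₁ p.2 q.2) else 0)
    (M : Matrix (Fin 2 × Fin 2) (Fin 4) ℂ)
    (hM : M = Matrix.of fun x k =>
      if k = 0 then (if x = (0, 0) then 1 else if x = (1, 1) then 1 else 0) / (Real.sqrt 2 : ℂ)
      else if k = 1 then
        (-Complex.I) * (if x = (0, 0) then 1 else if x = (1, 1) then -1 else 0) / (Real.sqrt 2 : ℂ)
      else if k = 2 then
        (if x = (0, 1) then 1 else if x = (1, 0) then -1 else 0) / (Real.sqrt 2 : ℂ)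
      else
        (-Complex.I) * (if x = (0, 1) then 1 else if x = (1, 0) then 1 else 0) / (Real.sqrt 2 : ℂ))
    (VT : Matrix (Fin 2 × Fin 2) (Fin 2 × Fin 2) ℂ)
    (hVT : VT = M * (Mᴴ * V * M)ᵀ * Mᴴ)
    (d : ℝ) (hd : ((2 * Real.cos d : ℝ) : ℂ) = (U₀ᴴ * U₁).trace) :
    (∃ W ∈ Matrix.unitaryGroup (Fin 2 × Fin 2) ℂ,
      VT * V = W * (Matrix.of fun p q => if p.1 = q.1 then
        (if p.1 = 1 then (U₀ᴴ * U₁) p.2 q.2 else (U₁ᴴ * U₀) p.2 q.2) else 0) * Wᴴ)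
    ∧ (VT * V).charpoly
        = (X - C (Complex.exp (Complex.I * d))) ^ 2
          * (X - C (Complex.exp (-(Complex.I * d)))) ^ 2 := by
  have hV : V = controlled U₀ U₁ := hV.trans (controlled_eq_of U₀ U₁).symm
  have hVT : VT = magicTranspose V := by rw [hVT, hM]; rfl
  have hVTV : VT * V = controlled (U₁ᴴ * U₀) (U₀ᴴ * U₁) := by
    rw [hVT, hV, magicTranspose_controlled, adjugate_eq_conjTranspose_of_mem_unitaryGroup hU₀ hdet₀,
      adjugate_eq_conjTranspose_of_mem_unitaryGroup hU₁ hdet₁, controlled_mul_controlled]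
  have hdet : ∀ A B : Matrix (Fin 2) (Fin 2) ℂ, A.det = 1 → B.det = 1 → (Aᴴ * B).det = 1 := by
    intro A B hA hB
    rw [det_mul, det_conjTranspose, hA, hB, star_one, one_mul]
  have htr : (U₁ᴴ * U₀).trace = ((2 * Real.cos d : ℝ) : ℂ) := by
    rw [← conjTranspose_conjTranspose U₀, ← conjTranspose_mul, trace_conjTranspose, ← hd,
      Complex.star_def, Complex.conj_ofReal]
  refine ⟨⟨1, one_mem _, ?_⟩, ?_⟩
  · rw [hVTV, controlled_eq_of, one_mul, conjTranspose_one, mul_one]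
    ext ⟨a, i⟩ ⟨b, j⟩
    fin_cases a <;> fin_cases b <;> simp
  · rw [hVTV, charpoly_controlled, charpoly_eq_of_trace_eq_two_cos htr (hdet _ _ hdet₁ hdet₀),
      charpoly_eq_of_trace_eq_two_cos hd.symm (hdet _ _ hdet₀ hdet₁)]
    ring
end

section
/- Consider the generalized amplitude damping channel N on a qubit with Kraus operators K_0 = diag(1, c), K_1 = s·|0⟩⟨1| where c = (1+e^{iπγ})/2 and s = (1−e^{iπγ})/2, γ ∈ [0,1]. Its Choi matrix ρ_{RB} = (id⊗N)(|Φ⟩⟨Φ|) with |Φ⟩ = (|00⟩+|11⟩)/√2 satisfies: λ_max(ρ_{RB}) ≤ λ_max(ρ_B) if and only if γ ∈ [1/2, 1], where ρ_B = Tr_R ρ_{RB}. -/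
/-!
Up to a reordering of the basis, the Choi matrix is block diagonal: on span{|00⟩, |11⟩} it is
the rank-one block `[[1/2, c̄/2], [c/2, |c|²/2]]`, with eigenvalues `0` and `(1 + |c|²)/2`,
and the two remaining diagonal entries are `0` and `|s|²/2`, while
`ρ_B = diag((1 + |s|²)/2, |c|²/2)`. Since `|c|² + |s|² = 1`, the largest eigenvalues are
`(1 + |c|²)/2` and `(1 + |s|²)/2`, so the criterion reads `|c|² ≤ |s|²`, i.e. `cos(πγ) ≤ 0`.
-/

open Matrix Kronecker ComplexConjugate Polynomial

namespace Matrix.IsHermitian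

variable {𝕜 n : Type*} [RCLike 𝕜] [Fintype n] [DecidableEq n] {M : Matrix n n 𝕜}

theorem exists_eigenvalues_eq_iff_eval_charpoly (hM : M.IsHermitian) (x : ℝ) :
    (∃ i, hM.eigenvalues i = x) ↔ M.charpoly.eval (x : 𝕜) = 0 := by
  rw [hM.charpoly_eq, eval_prod, Finset.prod_eq_zero_iff]
  simp [sub_eq_zero, eq_comm (a := (x : 𝕜))]

theorem sup'_eigenvalues_eq [Nonempty n] (hM : M.IsHermitian) {μ : ℝ}
    (hμ : M.charpoly.eval (μ : 𝕜) = 0) (hle : ∀ x : ℝ, M.charpoly.eval (x : 𝕜) = 0 → x ≤ μ) :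
    Finset.univ.sup' Finset.univ_nonempty hM.eigenvalues = μ := by
  obtain ⟨i, rfl⟩ := (hM.exists_eigenvalues_eq_iff_eval_charpoly μ).2 hμ
  refine le_antisymm (Finset.sup'_le _ _ fun j _ => hle _ ?_) (Finset.le_sup' _ (Finset.mem_univ i))
  exact (hM.exists_eigenvalues_eq_iff_eval_charpoly _).1 ⟨j, rfl⟩

end Matrix.IsHermitian

def Matrix.traceLeft {m n R : Type*} [Fintype m] [AddCommMonoid R]
    (ρ : Matrix (m × n) (m × n) R) : Matrix n n R :=
  of fun b b' => ∑ r, ρ (r, b) (r, b')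

noncomputable section

def maxEntangled : Matrix (Fin 2 × Fin 2) (Fin 2 × Fin 2) ℂ :=
  of fun p q => ((if p.1 = p.2 then 1 else 0) * (if q.1 = q.2 then 1 else 0) : ℂ) / 2

def dampingChoi (c s : ℂ) : Matrix (Fin 2 × Fin 2) (Fin 2 × Fin 2) ℂ :=
  ((1 : Matrix (Fin 2) (Fin 2) ℂ) ⊗ₖ !![1, 0; 0, c]) * maxEntangled
      * ((1 : Matrix (Fin 2) (Fin 2) ℂ) ⊗ₖ !![1, 0; 0, c])ᴴ
    + ((1 : Matrix (Fin 2) (Fin 2) ℂ) ⊗ₖ !![0, s; 0, 0]) * maxEntangled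
      * ((1 : Matrix (Fin 2) (Fin 2) ℂ) ⊗ₖ !![0, s; 0, 0])ᴴ

end

section DampingChoi

open Complex

-- `finProdFinEquiv` numbers the basis `|00⟩, |01⟩, |10⟩, |11⟩` as `0, 1, 2, 3`.
theorem dampingChoi_eq_reindex (c s : ℂ) :
    dampingChoi c s = reindex finProdFinEquiv.symm finProdFinEquiv.symm !![1 / 2, 0, 0, conj c / 2;
        0, 0, 0, 0;
        0, 0, (normSq s : ℂ) / 2, 0;
        c / 2, 0, 0, (normSq c : ℂ) / 2] := by
  ext ⟨i, j⟩ ⟨k, l⟩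
  fin_cases i <;> fin_cases j <;> fin_cases k <;> fin_cases l <;>
    simp [dampingChoi, maxEntangled, mul_apply, Fintype.sum_prod_type, one_apply, finProdFinEquiv,
      ← mul_conj] <;> ring

theorem eval_charpoly_dampingChoi (c s z : ℂ) :
    (dampingChoi c s).charpoly.eval z
      = z ^ 2 * (z - normSq s / 2) * (z - (1 + normSq c) / 2) := by
  rw [dampingChoi_eq_reindex, charpoly_reindex, eval_charpoly, det_succ_row_zero]
  simp [Fin.sum_univ_succ, det_fin_three, Fin.succAbove, ← mul_conj]
  ring

theorem traceLeft_dampingChoi (c s : ℂ) :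
    (dampingChoi c s).traceLeft = !![(1 + normSq s : ℂ) / 2, 0; 0, (normSq c : ℂ) / 2] := by
  ext b b'
  fin_cases b <;> fin_cases b' <;>
    simp [traceLeft, dampingChoi_eq_reindex, finProdFinEquiv]; ring

theorem eval_charpoly_traceLeft_dampingChoi (c s z : ℂ) :
    (dampingChoi c s).traceLeft.charpoly.eval z
      = (z - (1 + normSq s) / 2) * (z - normSq c / 2) := by
  rw [traceLeft_dampingChoi, eval_charpoly, det_fin_two]
  simp

theorem sup'_eigenvalues_dampingChoi {c s : ℂ} (hcs : normSq c + normSq s = 1)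
    (h : (dampingChoi c s).IsHermitian) :
    Finset.univ.sup' Finset.univ_nonempty h.eigenvalues = (1 + normSq c) / 2 := by
  refine h.sup'_eigenvalues_eq (by simp [eval_charpoly_dampingChoi]) fun x hx => ?_
  have hx : x ^ 2 * (x - normSq s / 2) * (x - (1 + normSq c) / 2) = 0 := by
    exact_mod_cast (eval_charpoly_dampingChoi c s x).symm.trans hx
  rcases mul_eq_zero.1 hx with hx | hx
  · rcases mul_eq_zero.1 hx with hx | hx
    · nlinarith [normSq_nonneg c, pow_eq_zero_iff (n := 2) two_ne_zero |>.1 hx]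
    · nlinarith [normSq_nonneg c]
  · linarith

theorem sup'_eigenvalues_traceLeft_dampingChoi {c s : ℂ} (hcs : normSq c + normSq s = 1)
    (h : (dampingChoi c s).traceLeft.IsHermitian) :
    Finset.univ.sup' Finset.univ_nonempty h.eigenvalues = (1 + normSq s) / 2 := by
  refine h.sup'_eigenvalues_eq (by simp [eval_charpoly_traceLeft_dampingChoi]) fun x hx => ?_
  have hx : (x - (1 + normSq s) / 2) * (x - normSq c / 2) = 0 := by
    exact_mod_cast (eval_charpoly_traceLeft_dampingChoi c s x).symm.trans hx
  rcases mul_eq_zero.1 hx with hx | hx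
  · linarith
  · nlinarith [normSq_nonneg s]

theorem sup'_eigenvalues_dampingChoi_le_iff {c s : ℂ} (hcs : normSq c + normSq s = 1)
    (hRB : (dampingChoi c s).IsHermitian) (hB : (dampingChoi c s).traceLeft.IsHermitian) :
    Finset.univ.sup' Finset.univ_nonempty hRB.eigenvalues
        ≤ Finset.univ.sup' Finset.univ_nonempty hB.eigenvalues ↔ normSq c ≤ normSq s := by
  rw [sup'_eigenvalues_dampingChoi hcs, sup'_eigenvalues_traceLeft_dampingChoi hcs]
  constructor <;> intro h <;> linarith

theorem normSq_one_add_exp_mul_I_div_two (θ : ℝ) :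
    normSq ((1 + exp (θ * I)) / 2) = (1 + Real.cos θ) / 2 := by
  rw [normSq_div, normSq_apply, add_re, add_im, one_re, one_im, exp_ofReal_mul_I_re,
    exp_ofReal_mul_I_im, normSq_ofNat]
  linear_combination (1 / 4 : ℝ) * Real.sin_sq_add_cos_sq θ

theorem normSq_one_sub_exp_mul_I_div_two (θ : ℝ) :
    normSq ((1 - exp (θ * I)) / 2) = (1 - Real.cos θ) / 2 := by
  rw [normSq_div, normSq_apply, sub_re, sub_im, one_re, one_im, exp_ofReal_mul_I_re,
    exp_ofReal_mul_I_im, normSq_ofNat]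
  linear_combination (1 / 4 : ℝ) * Real.sin_sq_add_cos_sq θ

end DampingChoi

theorem Real.cos_pi_mul_nonpos_iff {γ : ℝ} (hγ : γ ∈ Set.Icc (0 : ℝ) 1) :
    Real.cos (Real.pi * γ) ≤ 0 ↔ γ ∈ Set.Icc (1 / 2 : ℝ) 1 := by
  have := Real.pi_pos
  constructor
  · intro h
    refine ⟨?_, hγ.2⟩
    by_contra! hlt
    have : 0 < Real.cos (Real.pi * γ) :=
      Real.cos_pos_of_mem_Ioo ⟨by nlinarith [hγ.1], by nlinarith⟩
    linarith
  · intro h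
    exact Real.cos_nonpos_of_pi_div_two_le_of_le (by nlinarith [h.1]) (by nlinarith [h.2])

/-- Myhr–Lütkenhaus criterion for `SWAP^γ` with environment `|0⟩`: the Choi matrix
`ρ_{RB} = (id⊗N)(Φ)` of the induced generalized amplitude damping channel satisfies
`λ_max(ρ_{RB}) ≤ λ_max(ρ_B)` iff `γ ∈ [1/2, 1]`. -/
theorem stmt18 (γ : ℝ) (hγ : γ ∈ Set.Icc (0 : ℝ) 1)
    (c s : ℂ) (hc : c = (1 + Complex.exp (Complex.I * Real.pi * γ)) / 2)
    (hs : s = (1 - Complex.exp (Complex.I * Real.pi * γ)) / 2)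
    (K₀ K₁ : Matrix (Fin 2) (Fin 2) ℂ)
    (hK₀ : K₀ = !![1, 0; 0, c]) (hK₁ : K₁ = !![0, s; 0, 0])
    (Φ : Matrix (Fin 2 × Fin 2) (Fin 2 × Fin 2) ℂ)
    (hΦ : Φ = Matrix.of fun p q =>
      ((if p.1 = p.2 then 1 else 0) * (if q.1 = q.2 then 1 else 0) : ℂ) / 2)
    (ρRB : Matrix (Fin 2 × Fin 2) (Fin 2 × Fin 2) ℂ)
    (hρRB : ρRB = ((1 : Matrix (Fin 2) (Fin 2) ℂ) ⊗ₖ K₀) * Φ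
          * ((1 : Matrix (Fin 2) (Fin 2) ℂ) ⊗ₖ K₀)ᴴ
        + ((1 : Matrix (Fin 2) (Fin 2) ℂ) ⊗ₖ K₁) * Φ
          * ((1 : Matrix (Fin 2) (Fin 2) ℂ) ⊗ₖ K₁)ᴴ)
    (ρB : Matrix (Fin 2) (Fin 2) ℂ)
    (hρB : ρB = Matrix.of fun b b' => ∑ r, ρRB (r, b) (r, b'))
    (hRB : ρRB.IsHermitian) (hB : ρB.IsHermitian) :
    Finset.univ.sup' Finset.univ_nonempty hRB.eigenvalues
        ≤ Finset.univ.sup' Finset.univ_nonempty hB.eigenvalues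
      ↔ γ ∈ Set.Icc (1 / 2 : ℝ) 1 := by
  subst hK₀ hK₁ hΦ hρB hρRB
  have hθ : Complex.I * Real.pi * γ = (Real.pi * γ : ℝ) * Complex.I := by push_cast; ring
  have hc2 : Complex.normSq c = (1 + Real.cos (Real.pi * γ)) / 2 := by
    rw [hc, hθ, normSq_one_add_exp_mul_I_div_two]
  have hs2 : Complex.normSq s = (1 - Real.cos (Real.pi * γ)) / 2 := by
    rw [hs, hθ, normSq_one_sub_exp_mul_I_div_two]
  refine (sup'_eigenvalues_dampingChoi_le_iff (by rw [hc2, hs2]; ring) hRB hB).trans ?_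
  rw [hc2, hs2, ← Real.cos_pi_mul_nonpos_iff hγ]
  constructor <;> intro h <;> linarith
end
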